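/- Let $f:\mathcal{X}\to\mathcal{Z}$ be a surjective map between finite sets with $|\mathcal{X}|=r$ and $|\mathcal{Z}|=k$. Then $\inf_{g:\Delta_k\to\Delta_r}\ \sup_{P_X\in\Delta_r}\ D(P_X\,\|\,g(P_X(f^{-1}))) = \max_{j\in\mathcal{Z}} \log|f^{-1}(j)|$, where $P_X(f^{-1})$ denotes the pushforward pmf $(P_X(f^{-1}(0)),\ldots,P_X(f^{-1}(k-1)))\in\Delta_k$. -/
import Mathlib


open Finset

/-- The simplex of probability mass functions on a finite type. -/
def Simplex (α : Type*) [Fintype α] : Type _ :=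
  {p : α → ℝ // (∀ a, 0 ≤ p a) ∧ ∑ a, p a = 1}

open Classical in
/-- Extended-real-valued Kullback–Leibler divergence (base 2), equal to `⊤`
whenever absolute continuity fails. -/
noncomputable def klE {α : Type*} [Fintype α] (P Q : α → ℝ) : EReal :=
  ∑ x, if P x ≠ 0 ∧ Q x = 0 then (⊤ : EReal)
    else ((P x * Real.logb 2 (P x / Q x) : ℝ) : EReal)

/-- Pushforward of a pmf on `X` along `f : X → Z`, as a pmf on `Z`. -/
noncomputable def pushf {X Z : Type*} [Fintype X] [Fintype Z] [DecidableEq Z]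
    (f : X → Z) (P : Simplex X) : Simplex Z :=
  ⟨fun j => ∑ x ∈ Finset.univ.filter (fun x => f x = j), P.1 x,
    fun j => Finset.sum_nonneg fun x _ => P.2.1 x,
    by
      show ∑ j, ∑ x ∈ Finset.univ.filter (fun x => f x = j), P.1 x = 1
      rw [Finset.sum_fiberwise Finset.univ f P.1]
      exact P.2.2⟩

/-- Coercion `ℝ → EReal` commutes with finite sums. -/
lemma EReal.coe_fsum {α : Type*} (s : Finset α) (f : α → ℝ) :
    ((∑ x ∈ s, f x : ℝ) : EReal) = ∑ x ∈ s, ((f x : ℝ) : EReal) :=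
  map_sum (⟨⟨Real.toEReal, EReal.coe_zero⟩, EReal.coe_add⟩ : ℝ →+ EReal) f s

/-- When absolute continuity holds, `klE` is the coercion of a real sum. -/
lemma klE_eq_coe {α : Type*} [Fintype α] (P Q : α → ℝ)
    (h : ∀ x, P x ≠ 0 → Q x ≠ 0) :
    klE P Q = ((∑ x, P x * Real.logb 2 (P x / Q x) : ℝ) : EReal) := by
  rw [klE, EReal.coe_fsum]
  refine Finset.sum_congr rfl fun x _ => ?_
  rw [if_neg]
  rintro ⟨h1, h2⟩
  exact h x h1 h2

/-- The locally uniform estimator. -/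
noncomputable def gopt {X Z : Type*} [Fintype X] [Fintype Z] [DecidableEq Z]
    (f : X → Z) (hf : Function.Surjective f) (Q : Simplex Z) : Simplex X :=
  ⟨fun x => Q.1 (f x) / (Finset.univ.filter (fun y => f y = f x)).card,
    fun x => div_nonneg (Q.2.1 (f x)) (Nat.cast_nonneg _),
    by
      rw [← Finset.sum_fiberwise Finset.univ f
        (fun x => Q.1 (f x) / (Finset.univ.filter (fun y => f y = f x)).card)]
      have key : ∀ j : Z, ∑ x ∈ Finset.univ.filter (fun x => f x = j),
          Q.1 (f x) / (Finset.univ.filter (fun y => f y = f x)).card = Q.1 j := by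
        intro j
        have hcard : 0 < (Finset.univ.filter (fun y => f y = j)).card := by
          obtain ⟨x, hx⟩ := hf j
          exact Finset.card_pos.2 ⟨x, Finset.mem_filter.2 ⟨Finset.mem_univ _, hx⟩⟩
        have : ∀ x ∈ Finset.univ.filter (fun x => f x = j),
            Q.1 (f x) / ((Finset.univ.filter (fun y => f y = f x)).card : ℝ)
              = Q.1 j / (Finset.univ.filter (fun y => f y = j)).card := by
          intro x hx
          rw [Finset.mem_filter] at hx
          rw [hx.2]
        rw [Finset.sum_congr rfl this, Finset.sum_const, nsmul_eq_mul]
        have hne : ((Finset.univ.filter (fun y => f y = j)).card : ℝ) ≠ 0 :=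
          Nat.cast_ne_zero.2 hcard.ne'
        field_simp
      rw [Finset.sum_congr rfl fun j _ => key j]
      exact Q.2.2⟩

theorem minmax_estimation_pushforward {X Z : Type*} [Fintype X] [Fintype Z]
    [DecidableEq Z] [Nonempty Z]
    (f : X → Z) (hf : Function.Surjective f) :
    (⨅ g : Simplex Z → Simplex X, ⨆ P : Simplex X, klE P.1 ((g (pushf f P)).1)) =
      ⨆ j : Z,
        ((Real.logb 2 ((Finset.univ.filter (fun x => f x = j)).card) : ℝ) : EReal) := by
  classical
  have hNpos : ∀ j : Z, 0 < (Finset.univ.filter (fun x => f x = j)).card := by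
    intro j
    obtain ⟨x, hx⟩ := hf j
    exact Finset.card_pos.2 ⟨x, Finset.mem_filter.2 ⟨Finset.mem_univ _, hx⟩⟩
  apply le_antisymm
  · -- upper bound: play the locally uniform estimator
    obtain ⟨j0, -, hj0⟩ := Finset.exists_max_image Finset.univ
      (fun j : Z => (Finset.univ.filter (fun x => f x = j)).card)
      ⟨Classical.arbitrary Z, Finset.mem_univ _⟩
    refine le_trans (iInf_le _ (gopt f hf)) (iSup_le fun P => ?_)
    refine le_trans ?_ (le_iSup (fun j : Z =>
      ((Real.logb 2 ((Finset.univ.filter (fun x => f x = j)).card) : ℝ) : EReal)) j0)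
    have hac : ∀ x, P.1 x ≠ 0 → (gopt f hf (pushf f P)).1 x ≠ 0 := by
      intro x hx
      have hP : 0 < P.1 x := lt_of_le_of_ne (P.2.1 x) (Ne.symm hx)
      have hQx : P.1 x ≤ (pushf f P).1 (f x) := by
        refine Finset.single_le_sum (fun y _ => P.2.1 y) ?_
        exact Finset.mem_filter.2 ⟨Finset.mem_univ _, rfl⟩
      have : 0 < (gopt f hf (pushf f P)).1 x :=
        div_pos (lt_of_lt_of_le hP hQx) (Nat.cast_pos.2 (hNpos (f x)))
      exact this.ne'
    rw [klE_eq_coe _ _ hac]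
    apply EReal.coe_le_coe_iff.2
    have hterm : ∀ x : X, P.1 x * Real.logb 2 (P.1 x / (gopt f hf (pushf f P)).1 x)
        ≤ P.1 x * Real.logb 2 ((Finset.univ.filter (fun x => f x = j0)).card) := by
      intro x
      by_cases hx : P.1 x = 0
      · simp [hx]
      have hP : 0 < P.1 x := lt_of_le_of_ne (P.2.1 x) (Ne.symm hx)
      have hQx : P.1 x ≤ (pushf f P).1 (f x) := by
        refine Finset.single_le_sum (fun y _ => P.2.1 y) ?_
        exact Finset.mem_filter.2 ⟨Finset.mem_univ _, rfl⟩
      have hQpos : 0 < (pushf f P).1 (f x) := lt_of_lt_of_le hP hQx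
      have hNcast : (0:ℝ) < ((Finset.univ.filter (fun y => f y = f x)).card : ℝ) :=
        Nat.cast_pos.2 (hNpos (f x))
      have hval : (gopt f hf (pushf f P)).1 x
          = (pushf f P).1 (f x) / ((Finset.univ.filter (fun y => f y = f x)).card : ℝ) := rfl
      rw [hval]
      have hrw : P.1 x / ((pushf f P).1 (f x) / ((Finset.univ.filter (fun y => f y = f x)).card : ℝ))
          = (P.1 x / (pushf f P).1 (f x)) * ((Finset.univ.filter (fun y => f y = f x)).card : ℝ) := by
        field_simp
      rw [hrw, Real.logb_mul (by positivity) hNcast.ne']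
      have h1 : Real.logb 2 (P.1 x / (pushf f P).1 (f x)) ≤ 0 :=
        Real.logb_nonpos one_lt_two (by positivity) ((div_le_one hQpos).2 hQx)
      have h2 : Real.logb 2 ((Finset.univ.filter (fun y => f y = f x)).card : ℝ)
          ≤ Real.logb 2 ((Finset.univ.filter (fun x => f x = j0)).card : ℝ) :=
        Real.logb_le_logb_of_le one_lt_two hNcast
          (Nat.cast_le.2 (hj0 (f x) (Finset.mem_univ _)))
      have := add_le_add h1 h2
      rw [zero_add] at this
      exact mul_le_mul_of_nonneg_left this (P.2.1 x)
    calc ∑ x, P.1 x * Real.logb 2 (P.1 x / (gopt f hf (pushf f P)).1 x)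
        ≤ ∑ x, P.1 x * Real.logb 2 ((Finset.univ.filter (fun x => f x = j0)).card) :=
          Finset.sum_le_sum fun x _ => hterm x
      _ = Real.logb 2 ((Finset.univ.filter (fun x => f x = j0)).card) := by
          rw [← Finset.sum_mul, P.2.2, one_mul]
  · -- lower bound
    refine le_iInf fun g => iSup_le fun j => ?_
    set N := (Finset.univ.filter (fun x => f x = j)).card with hN
    have hNcast : (0:ℝ) < (N:ℝ) := Nat.cast_pos.2 (hNpos j)
    -- the point mass on j as a pmf on Z
    have hδ1 : ∀ j' : Z, (0:ℝ) ≤ if j' = j then 1 else 0 := by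
      intro j'; split <;> norm_num
    have hδ2 : ∑ j' : Z, (if j' = j then (1:ℝ) else 0) = 1 := by
      rw [Finset.sum_ite_eq' Finset.univ j (fun _ => (1:ℝ)), if_pos (Finset.mem_univ _)]
    set δj : Simplex Z := ⟨fun j' => if j' = j then 1 else 0, hδ1, hδ2⟩ with hδj
    set Q' : X → ℝ := (g δj).1 with hQ'
    obtain ⟨x0, hx0mem, hx0min⟩ := (Finset.univ.filter (fun x => f x = j)).exists_min_image Q'
      (Finset.card_pos.1 (hNpos j))
    have hx0f : f x0 = j := (Finset.mem_filter.1 hx0mem).2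
    have hsum1 : ∑ x ∈ Finset.univ.filter (fun x => f x = j), Q' x ≤ 1 := by
      rw [← (g δj).2.2]
      exact Finset.sum_le_sum_of_subset_of_nonneg (Finset.subset_univ _)
        (fun x _ _ => (g δj).2.1 x)
    have hmin : (N:ℝ) * Q' x0 ≤ 1 := by
      refine le_trans ?_ hsum1
      have := Finset.card_nsmul_le_sum (Finset.univ.filter (fun x => f x = j)) Q' (Q' x0)
        (fun y hy => hx0min y hy)
      rwa [nsmul_eq_mul, ← hN] at this
    -- the point mass on x0 as a pmf on X
    have hp1 : ∀ x : X, (0:ℝ) ≤ if x = x0 then 1 else 0 := by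
      intro x; split <;> norm_num
    have hp2 : ∑ x : X, (if x = x0 then (1:ℝ) else 0) = 1 := by
      rw [Finset.sum_ite_eq' Finset.univ x0 (fun _ => (1:ℝ)), if_pos (Finset.mem_univ _)]
    set P : Simplex X := ⟨fun x => if x = x0 then 1 else 0, hp1, hp2⟩ with hP
    have hpush : pushf f P = δj := by
      apply Subtype.ext
      funext j'
      show ∑ x ∈ Finset.univ.filter (fun x => f x = j'), (if x = x0 then (1:ℝ) else 0)
        = if j' = j then 1 else 0
      rw [Finset.sum_ite_eq' (Finset.univ.filter (fun x => f x = j')) x0 (fun _ => (1:ℝ))]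
      by_cases h : j' = j
      · rw [if_pos h, if_pos (Finset.mem_filter.2 ⟨Finset.mem_univ _, by rw [hx0f, h]⟩)]
      · rw [if_neg h, if_neg]
        intro hmem
        exact h (by rw [← (Finset.mem_filter.1 hmem).2, hx0f])
    refine le_trans ?_ (le_iSup (fun P : Simplex X => klE P.1 ((g (pushf f P)).1)) P)
    rw [hpush]
    show ((Real.logb 2 (N:ℝ) : ℝ) : EReal) ≤ klE P.1 Q'
    by_cases hq : Q' x0 = 0
    · have htop : klE P.1 Q' = ⊤ := by
        rw [klE, Finset.sum_eq_single_of_mem x0 (Finset.mem_univ _)]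
        · rw [if_pos]
          refine ⟨?_, hq⟩
          show (if x0 = x0 then (1:ℝ) else 0) ≠ 0
          rw [if_pos rfl]; norm_num
        · intro b _ hb
          have hb0 : P.1 b = 0 := if_neg hb
          rw [if_neg, hb0, zero_mul, EReal.coe_zero]
          rintro ⟨h1, -⟩
          exact h1 hb0
      rw [htop]
      exact le_top
    · have hq' : 0 < Q' x0 := lt_of_le_of_ne ((g δj).2.1 x0) (Ne.symm hq)
      have hac : ∀ x, P.1 x ≠ 0 → Q' x ≠ 0 := by
        intro x hx
        have : x = x0 := by
          by_contra hc
          exact hx (if_neg hc)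
        rw [this]
        exact hq
      rw [klE_eq_coe _ _ hac]
      apply EReal.coe_le_coe_iff.2
      have hsingle : ∑ x, P.1 x * Real.logb 2 (P.1 x / Q' x)
          = Real.logb 2 (1 / Q' x0) := by
        rw [Finset.sum_eq_single_of_mem x0 (Finset.mem_univ _)]
        · show (if x0 = x0 then (1:ℝ) else 0) * Real.logb 2 ((if x0 = x0 then (1:ℝ) else 0) / Q' x0)
            = Real.logb 2 (1 / Q' x0)
          rw [if_pos rfl, one_mul]
        · intro b _ hb
          have hb0 : P.1 b = 0 := if_neg hb
          rw [hb0, zero_mul]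
      rw [hsingle]
      refine Real.logb_le_logb_of_le one_lt_two hNcast ?_
      rw [le_div_iff₀ hq']
      linarith [hmin]
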